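/- arXiv:2503.16187 — 4 statements merged into one kernel-verified Lean document; each statement's English description precedes it below -/
import Mathlib

section
/- Let m ≥ 1, let V ⊆ ℝᵐ be open, and let ρ : V × V → ℝ satisfy ρ(y, z) = ρ(z, y) ≥ 0 and ρ(y, y) = 0 for all y, z ∈ V, and suppose the map (y, z) ↦ ρ(y, z)² is C² on V × V. Then for every C¹ path γ : (−δ, δ) → V, one has lim_{t→0} ρ(γ(t), γ(0))²/t² = (1/2)·D²F(γ(0))[γ′(0), γ′(0)], where F : V → ℝ is the function F(z) = ρ(z, γ(0))² and D²F(γ(0)) is its second (Fréchet) derivative at γ(0); note DF(γ(0)) = 0 since F attains its minimum 0 at the interior point γ(0). -/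
/-!
Fix `x₀ = γ 0` and put `F z = ρ(z, x₀)²`. Then `F` is `C²` near `x₀` and attains its minimum `0`
there, so `DF(x₀) = 0` and the mean value inequality applied to `F - ½ D²F(x₀)[· - x₀, · - x₀]`,
whose derivative is `DF - D²F(x₀)(· - x₀) = o(‖· - x₀‖)`, gives
`F(x₀ + h) = ½ D²F(x₀)[h, h] + o(‖h‖²)`. Along the path, `‖γ s - x₀‖ = O(|s|)` and
`(γ s - x₀) / s → γ'(0)`, so `F(γ s) / s² → ½ D²F(x₀)[γ'(0), γ'(0)]`.
-/

open Set Filter Topology Asymptotics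

section SecondOrder

variable {E G : Type*} [NormedAddCommGroup E] [NormedSpace ℝ E]
  [NormedAddCommGroup G] [NormedSpace ℝ G]

theorem ContinuousLinearMap.hasFDerivAt_apply_sub_sub_of_symm (B : E →L[ℝ] E →L[ℝ] G)
    (hB : ∀ v w, B v w = B w v) (x y : E) :
    HasFDerivAt (fun z => B (z - x) (z - x)) ((2 : ℝ) • B (y - x)) y := by
  have h := B.hasFDerivAt_of_bilinear ((hasFDerivAt_id y).sub_const x)
    ((hasFDerivAt_id y).sub_const x)
  refine h.congr_fderiv (ContinuousLinearMap.ext fun w => ?_)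
  simp [two_smul, hB w y, hB w x]

theorem ContDiffAt.isLittleO_sub_sub_half_snd_fderiv {F : E → G} {x : E}
    (hF : ContDiffAt ℝ 2 F x) (hx : fderiv ℝ F x = 0) :
    (fun y => F y - F x - (1 / 2 : ℝ) • fderiv ℝ (fderiv ℝ F) x (y - x) (y - x))
      =o[𝓝 x] fun y => ‖y - x‖ ^ 2 := by
  set B := fderiv ℝ (fderiv ℝ F) x
  obtain ⟨r, hr, hball⟩ := Metric.eventually_nhds_iff_ball.mp (hF.eventually (by simp))
  have hnhds : 𝓝[Metric.ball x r] x = 𝓝 x := nhdsWithin_eq_nhds.mpr (Metric.ball_mem_nhds x hr)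
  have hderiv : ∀ y ∈ Metric.ball x r,
      HasFDerivWithinAt (fun y => F y - F x - (1 / 2 : ℝ) • B (y - x) (y - x))
        (fderiv ℝ F y - B (y - x)) (Metric.ball x r) y := by
    intro y hy
    have hFy := ((hball y hy).differentiableAt two_ne_zero).hasFDerivAt
    have hQ := B.hasFDerivAt_apply_sub_sub_of_symm (hF.isSymmSndFDerivAt (by simp)).eq x y
    refine ((hFy.sub_const (F x)).sub (hQ.const_smul (1 / 2 : ℝ))).hasFDerivWithinAt.congr_fderiv ?_
    rw [smul_smul]
    norm_num
  have hB : HasFDerivAt (fderiv ℝ F) B x :=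
    ((hF.fderiv_right (m := 1) le_rfl).differentiableAt one_ne_zero).hasFDerivAt
  have hsmall : (fun y => fderiv ℝ F y - B (y - x)) =o[𝓝[Metric.ball x r] x]
      fun y => ‖y - x‖ ^ 1 := by
    rw [hnhds]
    simpa [hx] using (hasFDerivAt_iff_isLittleO.mp hB).norm_right
  simpa [hnhds] using
    (convex_ball x r).isLittleO_pow_succ (Metric.mem_ball_self hr) hderiv hsmall

theorem HasDerivAt.isLittleO_comp_sq {α : Type*} [Norm α] {γ : ℝ → E} {v : E} {t : ℝ}
    (hγ : HasDerivAt γ v t) {R : E → α} (hR : R =o[𝓝 (γ t)] fun y => ‖y - γ t‖ ^ 2) :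
    (fun s => R (γ s)) =o[𝓝 t] fun s => (s - t) ^ 2 :=
  (hR.comp_tendsto hγ.continuousAt).trans_isBigO (hγ.isBigO_sub.norm_left.pow 2)

theorem HasDerivAt.tendsto_inv_sq_smul_apply_sub_sub {γ : ℝ → E} {v : E} {t : ℝ}
    (hγ : HasDerivAt γ v t) (B : E →L[ℝ] E →L[ℝ] G) :
    Tendsto (fun s => ((s - t) ^ 2)⁻¹ • B (γ s - γ t) (γ s - γ t)) (𝓝[≠] t) (𝓝 (B v v)) := by
  have hB : Continuous fun w => B w w := by fun_prop
  refine ((hB.tendsto v).comp (hasDerivAt_iff_tendsto_slope.mp hγ)).congr fun s => ?_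
  simp [slope_def_module, smul_smul, pow_two]

theorem HasDerivAt.tendsto_inv_sq_smul_comp_sub {γ : ℝ → E} {v : E} {t : ℝ}
    (hγ : HasDerivAt γ v t) {F : E → G} (B : E →L[ℝ] E →L[ℝ] G)
    (hF : (fun y => F y - F (γ t) - B (y - γ t) (y - γ t)) =o[𝓝 (γ t)]
      fun y => ‖y - γ t‖ ^ 2) :
    Tendsto (fun s => ((s - t) ^ 2)⁻¹ • (F (γ s) - F (γ t))) (𝓝[≠] t) (𝓝 (B v v)) := by
  have h := (hγ.tendsto_inv_sq_smul_apply_sub_sub B).add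
    ((hγ.isLittleO_comp_sq hF).mono nhdsWithin_le_nhds).tendsto_inv_smul_nhds_zero
  rw [add_zero] at h
  refine h.congr fun s => ?_
  rw [← smul_add, add_sub_cancel]

end SecondOrder

theorem sq_dist_div_sq_tendsto_half_second_derivative_general
    (m : ℕ) (V : Set (EuclideanSpace ℝ (Fin m))) (hV : IsOpen V)
    (ρ : EuclideanSpace ℝ (Fin m) → EuclideanSpace ℝ (Fin m) → ℝ)
    (hρ_diag : ∀ y ∈ V, ρ y y = 0)
    (hC2 : ContDiffOn ℝ 2
      (fun p : EuclideanSpace ℝ (Fin m) × EuclideanSpace ℝ (Fin m) => (ρ p.1 p.2) ^ 2)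
      (V ×ˢ V))
    (δ : ℝ) (hδ : 0 < δ) (γ : ℝ → EuclideanSpace ℝ (Fin m))
    (hγ : ContDiffOn ℝ 1 γ (Ioo (-δ) δ))
    (hγV : ∀ s ∈ Ioo (-δ) δ, γ s ∈ V) :
    Tendsto (fun s : ℝ => (ρ (γ s) (γ 0)) ^ 2 / s ^ 2) (𝓝[≠] (0 : ℝ))
      (𝓝 ((1 / 2) *
        fderiv ℝ (fderiv ℝ (fun z => (ρ z (γ 0)) ^ 2)) (γ 0) (deriv γ 0) (deriv γ 0))) := by
  have h0 : (0 : ℝ) ∈ Ioo (-δ) δ := ⟨neg_neg_iff_pos.mpr hδ, hδ⟩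
  have hx₀ : γ 0 ∈ V := hγV 0 h0
  set F := fun z => (ρ z (γ 0)) ^ 2 with hF
  have hFC2 : ContDiffAt ℝ 2 F (γ 0) :=
    (hC2.contDiffAt ((hV.prod hV).mem_nhds ⟨hx₀, hx₀⟩)).comp (γ 0)
      (contDiffAt_id.prodMk contDiffAt_const)
  have hF₀ : F (γ 0) = 0 := by simp [hF, hρ_diag _ hx₀]
  have hcrit : fderiv ℝ F (γ 0) = 0 :=
    IsLocalMin.fderiv_eq_zero <| Eventually.of_forall fun z => by
      rw [hF₀]
      exact sq_nonneg _
  have hγ' : HasDerivAt γ (deriv γ 0) 0 :=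
    ((hγ.contDiffAt (isOpen_Ioo.mem_nhds h0)).differentiableAt one_ne_zero).hasDerivAt
  have hTaylor := hFC2.isLittleO_sub_sub_half_snd_fderiv hcrit
  simp_rw [← smul_apply] at hTaylor
  refine (hγ'.tendsto_inv_sq_smul_comp_sub _ hTaylor).congr fun s => ?_
  rw [sub_zero, hF₀, sub_zero, smul_eq_mul, div_eq_inv_mul]

/-- If `ρ` is a symmetric nonnegative function vanishing on the diagonal of an open set
`V ⊆ ℝᵐ` whose square is `C²` on `V × V`, then along any `C¹` path `γ : (-δ, δ) → V`,
`ρ(γ t, γ 0)² / t²` converges, as `t → 0`, to half the second Fréchet derivative of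
`z ↦ ρ(z, γ 0)²` at `γ 0` evaluated at `(γ'(0), γ'(0))`. -/
theorem sq_dist_div_sq_tendsto_half_second_derivative
    (m : ℕ) (hm : 1 ≤ m) (V : Set (EuclideanSpace ℝ (Fin m))) (hV : IsOpen V)
    (ρ : EuclideanSpace ℝ (Fin m) → EuclideanSpace ℝ (Fin m) → ℝ)
    (hρ_symm : ∀ y ∈ V, ∀ z ∈ V, ρ y z = ρ z y)
    (hρ_nonneg : ∀ y ∈ V, ∀ z ∈ V, 0 ≤ ρ y z)
    (hρ_diag : ∀ y ∈ V, ρ y y = 0)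
    (hC2 : ContDiffOn ℝ 2
      (fun p : EuclideanSpace ℝ (Fin m) × EuclideanSpace ℝ (Fin m) => (ρ p.1 p.2) ^ 2)
      (V ×ˢ V))
    (δ : ℝ) (hδ : 0 < δ) (γ : ℝ → EuclideanSpace ℝ (Fin m))
    (hγ : ContDiffOn ℝ 1 γ (Ioo (-δ) δ))
    (hγV : ∀ s ∈ Ioo (-δ) δ, γ s ∈ V) :
    Tendsto (fun s : ℝ => (ρ (γ s) (γ 0)) ^ 2 / s ^ 2) (𝓝[≠] (0 : ℝ))
      (𝓝 ((1 / 2) *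
        fderiv ℝ (fderiv ℝ (fun z => (ρ z (γ 0)) ^ 2)) (γ 0) (deriv γ 0) (deriv γ 0))) :=
  sq_dist_div_sq_tendsto_half_second_derivative_general m V hV ρ hρ_diag hC2 δ hδ γ hγ hγV
end

section
/- Let m ≥ 1, let V ⊆ ℝᵐ be open and convex, and let ρ : V × V → ℝ satisfy: ρ(y, z) ≥ 0, ρ(y, y) = 0, ρ(y, z) = ρ(z, y), and ρ(x, z) ≤ ρ(x, y) + ρ(y, z) for all x, y, z ∈ V; suppose moreover that (y, z) ↦ ρ(y, z)² is C² on V × V. For x ∈ V define the quadratic form Q_x(v) := (1/2)·D²(z ↦ ρ(z, x)²)(x)[v, v]. Then for every δ > 0 and every C¹ path γ : [0, δ] → V, ρ(γ(0), γ(δ)) ≤ ∫₀^δ √(Q_{γ(t)}(γ′(t))) dt. -/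
/-!
Put `f t := ρ (γ 0) (γ t)`. By the triangle inequality and symmetry, the difference
quotient `(f z - f t) / (z - t)` is at most `ρ (γ z) (γ t) / (z - t)`. The function
`ρ (·, γ t) ^ 2` vanishes at its minimum `γ t`, so its second-order Taylor expansion makes
`ρ (γ z) (γ t) ^ 2 / (z - t) ^ 2` tend to `½ D²(ρ (·, γ t) ^ 2) (γ t) (γ' t, γ' t)` as `z ↓ t`.
Hence the right Dini derivative of `f` is bounded by the integrand, which is continuous by the
joint `C²` regularity of `ρ ^ 2`, and a fencing argument bounds `f δ - f 0` by its integral.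
-/

open Set Filter Topology Asymptotics

section

variable {𝕜 E F H : Type*} [NontriviallyNormedField 𝕜] [NormedAddCommGroup E]
  [NormedSpace 𝕜 E] [NormedAddCommGroup F] [NormedSpace 𝕜 F] [NormedAddCommGroup H]
  [NormedSpace 𝕜 H]

theorem fderiv_fderiv_comp_prodMk_left_apply {G : E × F → H} {z : E} {x : F}
    (hG : ContDiffAt 𝕜 2 G (z, x)) (u v : E) :
    fderiv 𝕜 (fderiv 𝕜 fun y => G (y, x)) z u v =
      fderiv 𝕜 (fderiv 𝕜 G) (z, x) (u, 0) (v, 0) := by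
  set ι := ContinuousLinearMap.inl 𝕜 E F
  have hslice : (fderiv 𝕜 fun y => G (y, x)) =ᶠ[𝓝 z] fun y => (fderiv 𝕜 G (y, x)).comp ι := by
    have hpair : Tendsto (fun y => (y, x)) (𝓝 z) (𝓝 (z, x)) :=
      (continuous_id.prodMk continuous_const).tendsto z
    filter_upwards [hpair.eventually (hG.eventually (by simp))] with y hy
    exact ((hy.differentiableAt two_ne_zero).hasFDerivAt.comp y
      (hasFDerivAt_prodMk_left y x)).fderiv
  have hG' : HasFDerivAt (fderiv 𝕜 G) (fderiv 𝕜 (fderiv 𝕜 G) (z, x)) (z, x) :=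
    ((hG.fderiv_right (m := 1) le_rfl).differentiableAt one_ne_zero).hasFDerivAt
  have hcomp : HasFDerivAt (fun y => (fderiv 𝕜 G (y, x)).comp ι)
      (((ContinuousLinearMap.compL 𝕜 E (E × F) H).flip ι).comp
        ((fderiv 𝕜 (fderiv 𝕜 G) (z, x)).comp ι)) z :=
    ((ContinuousLinearMap.compL 𝕜 E (E × F) H).flip ι).hasFDerivAt.comp z
      (hG'.comp z (hasFDerivAt_prodMk_left z x))
  rw [hslice.fderiv_eq, hcomp.fderiv]
  simp [ι]

theorem ContDiffOn.continuousOn_fderiv_fderiv_comp_prodMk_left_apply {G : E × F → H}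
    {U : Set (E × F)} (hU : IsOpen U) (hG : ContDiffOn 𝕜 2 G U) {α : Type*}
    [TopologicalSpace α] {s : Set α} {γ : α → E} {η : α → F} {u v : α → E} (hγ : ContinuousOn γ s)
    (hη : ContinuousOn η s) (hu : ContinuousOn u s) (hv : ContinuousOn v s)
    (hmaps : MapsTo (fun t => (γ t, η t)) s U) :
    ContinuousOn (fun t => fderiv 𝕜 (fderiv 𝕜 fun z => G (z, η t)) (γ t) (u t) (v t)) s := by
  have hD2G := (hG.fderiv_of_isOpen hU le_rfl).continuousOn_fderiv_of_isOpen hU le_rfl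
  have hu0 : ContinuousOn (fun t => (u t, (0 : F))) s := hu.prodMk continuousOn_const
  have hv0 : ContinuousOn (fun t => (v t, (0 : F))) s := hv.prodMk continuousOn_const
  refine (((hD2G.comp (hγ.prodMk hη) hmaps).clm_apply hu0).clm_apply hv0).congr fun t ht => ?_
  exact fderiv_fderiv_comp_prodMk_left_apply (hG.contDiffAt (hU.mem_nhds (hmaps ht))) _ _

end

section

variable {E F : Type*} [NormedAddCommGroup E] [NormedSpace ℝ E] [NormedAddCommGroup F]
  [NormedSpace ℝ F]

theorem ContDiffAt.isLittleO_sub_taylor_two {f : E → F} {x : E} (hf : ContDiffAt ℝ 2 f x) :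
    (fun y => f y - f x - fderiv ℝ f x (y - x) -
        (1 / 2 : ℝ) • fderiv ℝ (fderiv ℝ f) x (y - x) (y - x)) =o[𝓝 x]
      fun y => ‖y - x‖ ^ 2 := by
  set B := fderiv ℝ (fderiv ℝ f) x
  obtain ⟨ε, hε, hball⟩ := Metric.eventually_nhds_iff_ball.1 (hf.eventually (by simp))
  have hf' : ∀ y ∈ Metric.ball x ε, HasFDerivAt f (fderiv ℝ f y) y := fun y hy =>
    ((hball y hy).differentiableAt (by simp)).hasFDerivAt
  have hB : HasFDerivAt (fderiv ℝ f) B x :=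
    ((hf.fderiv_right (m := 1) le_rfl).differentiableAt one_ne_zero).hasFDerivAt
  have hBsymm : ∀ u w, B u w = B w u :=
    second_derivative_symmetric_of_eventually
      (Metric.eventually_nhds_iff_ball.2 ⟨ε, hε, hf'⟩) hB
  have hquad : ∀ y, HasFDerivAt (fun y => (1 / 2 : ℝ) • B (y - x) (y - x)) (B (y - x)) y := by
    intro y
    have hsub : HasFDerivAt (fun y : E => y - x) (ContinuousLinearMap.id ℝ E) y :=
      (hasFDerivAt_id y).sub_const x
    refine ((B.hasFDerivAt_of_bilinear hsub hsub).const_smul (1 / 2 : ℝ)).congr_fderiv ?_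
    ext u
    simp [hBsymm u]
    module
  have hnhds : 𝓝[Metric.ball x ε] x = 𝓝 x :=
    Metric.isOpen_ball.nhdsWithin_eq (Metric.mem_ball_self hε)
  -- The remainder has derivative `f' y - f' x - B (y - x) = o(‖y - x‖)`; integrate on segments.
  have hrem := (convex_ball x ε).isLittleO_pow_succ (n := 1) (Metric.mem_ball_self hε)
    (f := fun y => f y - f x - fderiv ℝ f x (y - x) - (1 / 2 : ℝ) • B (y - x) (y - x))
    (f' := fun y => fderiv ℝ f y - fderiv ℝ f x - B (y - x))
    (fun y hy => ((((hf' y hy).sub_const _).sub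
      ((fderiv ℝ f x).hasFDerivAt.comp y ((hasFDerivAt_id y).sub_const x))).sub
        (hquad y)).hasFDerivWithinAt)
    (by simpa only [hnhds, pow_one, norm_norm, isLittleO_norm_right] using hB.isLittleO)
  rw [hnhds] at hrem
  simpa using hrem

theorem tendsto_div_sq_of_hasDerivWithinAt_Ioi {f : E → ℝ} {x : E}
    (hf : ContDiffAt ℝ 2 f x) (hfx : f x = 0) (hf'x : fderiv ℝ f x = 0) {γ : ℝ → E} {v : E} {t : ℝ}
    (hγ : HasDerivWithinAt γ v (Ioi t) t) (hγt : γ t = x) :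
    Tendsto (fun z => f (γ z) / (z - t) ^ 2) (𝓝[>] t)
      (𝓝 ((1 / 2) * fderiv ℝ (fderiv ℝ f) x v v)) := by
  subst hγt
  set B := fderiv ℝ (fderiv ℝ f) (γ t)
  have hslope : Tendsto (slope γ t) (𝓝[>] t) (𝓝 v) :=
    (hasDerivWithinAt_iff_tendsto_slope' (lt_irrefl t)).1 hγ
  have hrem : (fun z => f (γ z) - (1 / 2) * B (γ z - γ t) (γ z - γ t)) =o[𝓝[>] t]
      fun z => (z - t) ^ 2 := by
    have := hf.isLittleO_sub_taylor_two.comp_tendsto hγ.continuousWithinAt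
    simp only [hfx, hf'x, Function.comp_def, smul_eq_mul, sub_zero, zero_apply] at this
    exact this.trans_isBigO (hγ.hasFDerivWithinAt.isBigO_sub.norm_left.pow 2)
  have hquad : Continuous fun u => (1 / 2 : ℝ) * B u u := by fun_prop
  have hlim := hrem.tendsto_div_nhds_zero.add ((hquad.tendsto v).comp hslope)
  rw [zero_add] at hlim
  refine hlim.congr' (eventually_nhdsWithin_of_forall fun z (hz : t < z) => ?_)
  have hzt : z - t ≠ 0 := sub_ne_zero.2 hz.ne'
  simp only [Function.comp_def, slope_def_module, map_smul, smul_apply, smul_eq_mul]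
  field_simp
  ring

theorem tendsto_abs_div_of_contDiffAt_sq {d : E → ℝ} {x : E}
    (hd : ContDiffAt ℝ 2 (fun y => d y ^ 2) x) (hdx : d x = 0) {γ : ℝ → E} {v : E} {t : ℝ}
    (hγ : HasDerivWithinAt γ v (Ioi t) t) (hγt : γ t = x) :
    Tendsto (fun z => |d (γ z)| / (z - t)) (𝓝[>] t)
      (𝓝 (Real.sqrt ((1 / 2) * fderiv ℝ (fderiv ℝ fun y => d y ^ 2) x v v))) := by
  have hmin : IsLocalMin (fun y => d y ^ 2) x :=
    Eventually.of_forall fun y => by simpa [hdx] using sq_nonneg (d y)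
  refine ((Real.continuous_sqrt.tendsto _).comp (tendsto_div_sq_of_hasDerivWithinAt_Ioi hd
    (by simp [hdx]) hmin.fderiv_eq_zero hγ hγt)).congr'
    (eventually_nhdsWithin_of_forall fun z (hz : t < z) => ?_)
  rw [Function.comp_apply, ← div_pow, Real.sqrt_sq_eq_abs, abs_div, abs_of_pos (sub_pos.2 hz)]

theorem eventually_slope_dist_lt {ρ : E → E → ℝ} {V : Set E}
    (hρ_symm : ∀ y ∈ V, ∀ z ∈ V, ρ y z = ρ z y)
    (hρ_triangle : ∀ x ∈ V, ∀ y ∈ V, ∀ z ∈ V, ρ x z ≤ ρ x y + ρ y z) {p : E} (hp : p ∈ V)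
    {γ : ℝ → E} {v : E} {t : ℝ} (ht : γ t ∈ V) (hγV : ∀ᶠ z in 𝓝[>] t, γ z ∈ V)
    (hγ : HasDerivWithinAt γ v (Ioi t) t) (hρt : ρ (γ t) (γ t) = 0)
    (hsq : ContDiffAt ℝ 2 (fun y => ρ y (γ t) ^ 2) (γ t)) {r : ℝ}
    (hr : Real.sqrt ((1 / 2) * fderiv ℝ (fderiv ℝ fun y => ρ y (γ t) ^ 2) (γ t) v v) < r) :
    ∀ᶠ z in 𝓝[>] t, slope (fun z => ρ p (γ z)) t z < r := by
  filter_upwards [(tendsto_abs_div_of_contDiffAt_sq hsq hρt hγ rfl).eventually (gt_mem_nhds hr),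
    hγV, self_mem_nhdsWithin] with z hzr hzV (hz : t < z)
  refine lt_of_le_of_lt ?_ hzr
  rw [slope_def_field]
  refine div_le_div_of_nonneg_right ?_ (sub_pos.2 hz).le
  linarith [hρ_triangle _ hp _ ht _ hzV, hρ_symm _ ht _ hzV, le_abs_self (ρ (γ z) (γ t))]

end

theorem sub_le_integral_of_eventually_slope_lt {f g : ℝ → ℝ} {a b : ℝ} (hab : a ≤ b)
    (hf : ContinuousOn f (Icc a b)) (hg : ContinuousOn g (Icc a b))
    (hslope : ∀ t ∈ Ico a b, ∀ r, g t < r → ∀ᶠ z in 𝓝[>] t, slope f t z < r) :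
    f b - f a ≤ ∫ t in a..b, g t := by
  -- Extending `g` constantly beyond `[a, b]` makes its primitive differentiable everywhere.
  set G := IccExtend hab ((Icc a b).domRestrict g)
  have hG : Continuous G :=
    continuous_IccExtend_iff.2 (continuousOn_iff_continuous_domRestrict.1 hg)
  have hGg : EqOn G g (Icc a b) := fun t ht => IccExtend_of_mem hab _ ht
  have hB : ∀ t, HasDerivAt (fun t => f a + ∫ s in a..t, G s) (G t) t := fun t =>
    (hG.integral_hasStrictDerivAt a t).hasDerivAt.const_add _
  have hfB := image_le_of_liminf_slope_right_le_deriv_boundary hf (by simp)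
    (fun t _ => (hB t).continuousAt.continuousWithinAt) (fun t _ => (hB t).hasDerivWithinAt)
    (fun t ht r hr => (hslope t ht r (hGg (Ico_subset_Icc_self ht) ▸ hr)).frequently)
    (right_mem_Icc.2 hab)
  rw [intervalIntegral.integral_congr (by rwa [uIcc_of_le hab])] at hfB
  linarith

theorem dist_le_length_of_half_hessian_metric_general
    (m : ℕ) (V : Set (EuclideanSpace ℝ (Fin m)))
    (hV : IsOpen V)
    (ρ : EuclideanSpace ℝ (Fin m) → EuclideanSpace ℝ (Fin m) → ℝ)
    (hρ_nonneg : ∀ y ∈ V, ∀ z ∈ V, 0 ≤ ρ y z)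
    (hρ_diag : ∀ y ∈ V, ρ y y = 0)
    (hρ_symm : ∀ y ∈ V, ∀ z ∈ V, ρ y z = ρ z y)
    (hρ_triangle : ∀ x ∈ V, ∀ y ∈ V, ∀ z ∈ V, ρ x z ≤ ρ x y + ρ y z)
    (hC2 : ContDiffOn ℝ 2
      (fun p : EuclideanSpace ℝ (Fin m) × EuclideanSpace ℝ (Fin m) => (ρ p.1 p.2) ^ 2)
      (V ×ˢ V))
    (δ : ℝ) (hδ : 0 < δ) (γ : ℝ → EuclideanSpace ℝ (Fin m))
    (hγ : ContDiffOn ℝ 1 γ (Icc 0 δ))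
    (hγV : ∀ s ∈ Icc (0 : ℝ) δ, γ s ∈ V) :
    ρ (γ 0) (γ δ) ≤ ∫ s in (0 : ℝ)..δ, Real.sqrt ((1 / 2) *
      fderiv ℝ (fderiv ℝ (fun z => (ρ z (γ s)) ^ 2)) (γ s)
        (derivWithin γ (Icc 0 δ) s) (derivWithin γ (Icc 0 δ) s)) := by
  have hVV : IsOpen (V ×ˢ V) := hV.prod hV
  have h0 : (0 : ℝ) ∈ Icc 0 δ := left_mem_Icc.2 hδ.le
  have hγc : ContinuousOn γ (Icc 0 δ) := hγ.continuousOn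
  set γ' := derivWithin γ (Icc 0 δ)
  have hγ'c : ContinuousOn γ' (Icc 0 δ) :=
    hγ.continuousOn_derivWithin (uniqueDiffOn_Icc hδ) le_rfl
  have hdist : ContinuousOn (fun t => ρ (γ 0) (γ t)) (Icc 0 δ) := by
    refine ((hC2.continuousOn.comp (continuousOn_const.prodMk hγc)
      fun t ht => ⟨hγV 0 h0, hγV t ht⟩).sqrt).congr fun t ht => ?_
    exact (Real.sqrt_sq (hρ_nonneg _ (hγV 0 h0) _ (hγV t ht))).symm
  have hlength : ContinuousOn (fun s => Real.sqrt ((1 / 2) *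
      fderiv ℝ (fderiv ℝ fun z => ρ z (γ s) ^ 2) (γ s) (γ' s) (γ' s))) (Icc 0 δ) :=
    (continuousOn_const.mul (hC2.continuousOn_fderiv_fderiv_comp_prodMk_left_apply hVV hγc hγc
      hγ'c hγ'c fun s hs => ⟨hγV s hs, hγV s hs⟩)).sqrt
  have key := sub_le_integral_of_eventually_slope_lt hδ.le hdist hlength ?_
  · simpa [hρ_diag _ (hγV 0 h0)] using key
  rintro t ⟨ht0, htδ⟩ r hr
  have htV := hγV t ⟨ht0, htδ.le⟩
  have hIcc : Icc 0 δ ∈ 𝓝[>] t := mem_of_superset (Ioc_mem_nhdsGT htδ)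
    (Ioc_subset_Icc_self.trans (Icc_subset_Icc_left ht0))
  have hγ't : HasDerivWithinAt γ (γ' t) (Ioi t) t :=
    (hγ.differentiableOn one_ne_zero t ⟨ht0, htδ.le⟩).hasDerivWithinAt.mono_of_mem_nhdsWithin
      hIcc
  have hsq : ContDiffAt ℝ 2 (fun y => ρ y (γ t) ^ 2) (γ t) :=
    (hC2.contDiffAt (hVV.mem_nhds ⟨htV, htV⟩)).comp (f := fun y => (y, γ t)) _
      (contDiffAt_id.prodMk contDiffAt_const)
  exact eventually_slope_dist_lt hρ_symm hρ_triangle (hγV 0 h0) htV (mem_of_superset hIcc hγV)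
    hγ't (hρ_diag _ htV) hsq hr

/-- For a pseudometric-like function `ρ` on an open convex `V ⊆ ℝᵐ` whose square is `C²`
on `V × V`, with `Q_x(v) := (1/2) D²(z ↦ ρ(z,x)²)(x)[v,v]`, the `ρ`-distance between the
endpoints of any `C¹` path in `V` is bounded by the `Q`-length of the path. -/
theorem dist_le_length_of_half_hessian_metric
    (m : ℕ) (hm : 1 ≤ m) (V : Set (EuclideanSpace ℝ (Fin m)))
    (hV : IsOpen V) (hVconv : Convex ℝ V)
    (ρ : EuclideanSpace ℝ (Fin m) → EuclideanSpace ℝ (Fin m) → ℝ)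
    (hρ_nonneg : ∀ y ∈ V, ∀ z ∈ V, 0 ≤ ρ y z)
    (hρ_diag : ∀ y ∈ V, ρ y y = 0)
    (hρ_symm : ∀ y ∈ V, ∀ z ∈ V, ρ y z = ρ z y)
    (hρ_triangle : ∀ x ∈ V, ∀ y ∈ V, ∀ z ∈ V, ρ x z ≤ ρ x y + ρ y z)
    (hC2 : ContDiffOn ℝ 2
      (fun p : EuclideanSpace ℝ (Fin m) × EuclideanSpace ℝ (Fin m) => (ρ p.1 p.2) ^ 2)
      (V ×ˢ V))
    (δ : ℝ) (hδ : 0 < δ) (γ : ℝ → EuclideanSpace ℝ (Fin m))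
    (hγ : ContDiffOn ℝ 1 γ (Icc 0 δ))
    (hγV : ∀ s ∈ Icc (0 : ℝ) δ, γ s ∈ V) :
    ρ (γ 0) (γ δ) ≤ ∫ s in (0 : ℝ)..δ, Real.sqrt ((1 / 2) *
      fderiv ℝ (fderiv ℝ (fun z => (ρ z (γ s)) ^ 2)) (γ s)
        (derivWithin γ (Icc 0 δ) s) (derivWithin γ (Icc 0 δ) s)) :=
  dist_le_length_of_half_hessian_metric_general m V hV ρ hρ_nonneg hρ_diag hρ_symm hρ_triangle hC2 δ
    hδ γ hγ hγV
end

section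
/- Let δ, T > 0 and κ ≥ 0, and let h : ℝ → ℝ be four times continuously differentiable on an open set containing [−δ, T]. Suppose h(0) = 0, h′(0) = 0, h″(0) = 2, h(t) ≤ t² for all t ∈ [−δ, T], and |h⁗(t)| ≤ κ for all t ∈ [−δ, T]. Then h‴(0) = 0, and 0 ≤ t² − h(t) ≤ κ·t⁴/24 for all t ∈ [−δ, T]. -/
/-!
Write `c = h'''(0)`. Taylor's theorem with Lagrange remainder gives
`|h t - (t² + c t³ / 6)| ≤ κ t⁴ / 24` on `[-δ, T]`. Combined with `h t ≤ t²` this yields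
`c t³ ≤ (κ / 4) t⁴` for `t` of both signs; dividing by `t³` and letting `t → 0±` forces `c = 0`,
after which the Taylor estimate is exactly the upper bound on `t² - h t`.
-/

open Set Filter Topology
open scoped Nat

theorem abs_sub_sum_iteratedDeriv_le {f : ℝ → ℝ} {U : Set ℝ} {n : ℕ} {x₀ x C : ℝ}
    (hU : IsOpen U) (hf : ContDiffOn ℝ (n + 1) f U) (hxU : uIcc x₀ x ⊆ U)
    (hC : ∀ y ∈ uIcc x₀ x, |iteratedDeriv (n + 1) f y| ≤ C) :
    |f x - ∑ k ∈ Finset.range (n + 1), iteratedDeriv k f x₀ / k ! * (x - x₀) ^ k|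
      ≤ C * |x - x₀| ^ (n + 1) / (n + 1)! := by
  rcases eq_or_ne x₀ x with rfl | hx
  · simp [Finset.sum_range_succ']
  obtain ⟨y, hy, hremainder⟩ := taylor_mean_remainder_lagrange_iteratedDeriv hx (hf.mono hxU)
  have hx₀ : ContDiffAt ℝ (n + 1) f x₀ := hf.contDiffAt (hU.mem_nhds (hxU left_mem_uIcc))
  have hpoly : taylorWithinEval f n (uIcc x₀ x) x₀ x =
      ∑ k ∈ Finset.range (n + 1), iteratedDeriv k f x₀ / k ! * (x - x₀) ^ k := by
    rw [taylor_within_apply]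
    refine Finset.sum_congr rfl fun k hk => ?_
    have hk : (k : WithTop ℕ∞) ≤ n + 1 := by
      exact_mod_cast (Finset.mem_range.1 hk).le
    rw [iteratedDerivWithin_eq_iteratedDeriv (uniqueDiffOn_uIcc hx) (hx₀.of_le hk)
      left_mem_uIcc, smul_eq_mul]
    ring
  rw [← hpoly, hremainder, abs_div, abs_mul, abs_pow, Nat.abs_cast]
  gcongr
  exact hC y (uIoo_subset_uIcc_self hy)

theorem eq_zero_of_forall_mul_pow_three_le {δ T c K : ℝ} (hδ : 0 < δ) (hT : 0 < T)
    (h : ∀ t ∈ Icc (-δ) T, c * t ^ 3 ≤ K * t ^ 4) : c = 0 := by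
  have hlim : ∀ l : Filter ℝ, l ≤ 𝓝 0 → Tendsto (fun t => K * t) l (𝓝 0) := fun l hl =>
    ((continuous_const_mul K).tendsto' 0 0 (mul_zero K)).mono_left hl
  have hright : c ≤ 0 := by
    refine ge_of_tendsto (hlim _ (nhdsWithin_le_nhds (s := Ioi 0))) ?_
    filter_upwards [Ioo_mem_nhdsGT hT] with t ht
    have hcube : 0 < t ^ 3 := pow_pos ht.1 3
    refine le_of_mul_le_mul_right ?_ hcube
    linarith [h t ⟨by linarith [ht.1], ht.2.le⟩]
  have hleft : 0 ≤ c := by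
    refine le_of_tendsto (hlim _ (nhdsWithin_le_nhds (s := Iio 0))) ?_
    filter_upwards [Ioo_mem_nhdsLT (neg_lt_zero.2 hδ)] with t ht
    have hcube : 0 < -t ^ 3 := by nlinarith [pow_pos (neg_pos.2 ht.2) 3]
    refine le_of_mul_le_mul_right ?_ hcube
    linarith [h t ⟨ht.1.le, by linarith [ht.2]⟩]
  exact le_antisymm hright hleft

theorem third_deriv_eq_zero_and_fourth_order_bound_general
    {δ T κ : ℝ} (hδ : 0 < δ) (hT : 0 < T)
    (h : ℝ → ℝ) (U : Set ℝ) (hU : IsOpen U) (hIccU : Icc (-δ) T ⊆ U)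
    (hC4 : ContDiffOn ℝ 4 h U)
    (h0 : h 0 = 0) (h1 : deriv h 0 = 0) (h2 : iteratedDeriv 2 h 0 = 2)
    (hle : ∀ t ∈ Icc (-δ) T, h t ≤ t ^ 2)
    (hbound : ∀ t ∈ Icc (-δ) T, |iteratedDeriv 4 h t| ≤ κ) :
    iteratedDeriv 3 h 0 = 0 ∧
      ∀ t ∈ Icc (-δ) T, 0 ≤ t ^ 2 - h t ∧ t ^ 2 - h t ≤ κ * t ^ 4 / 24 := by
  have htaylor : ∀ t ∈ Icc (-δ) T,
      |h t - (t ^ 2 + iteratedDeriv 3 h 0 / 6 * t ^ 3)| ≤ κ * t ^ 4 / 24 := by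
    intro t ht
    have hsub : uIcc 0 t ⊆ Icc (-δ) T := uIcc_subset_Icc ⟨by linarith, hT.le⟩ ht
    have := abs_sub_sum_iteratedDeriv_le (n := 3) hU hC4 (hsub.trans hIccU)
      fun y hy => hbound y (hsub hy)
    have hpoly : ∑ k ∈ Finset.range 4, iteratedDeriv k h 0 / k ! * (t - 0) ^ k =
        t ^ 2 + iteratedDeriv 3 h 0 / 6 * t ^ 3 := by
      simp only [Finset.sum_range_succ, Finset.sum_range_zero, iteratedDeriv_zero,
        iteratedDeriv_one, h0, h1, h2, sub_zero]
      norm_num [Nat.factorial]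
    rwa [hpoly, sub_zero, Even.pow_abs ⟨2, rfl⟩,
      show ((3 + 1)! : ℝ) = 24 by norm_num [Nat.factorial]] at this
  have h3 : iteratedDeriv 3 h 0 = 0 := by
    refine eq_zero_of_forall_mul_pow_three_le (K := κ / 4) hδ hT fun t ht => ?_
    linarith [(abs_le.1 (htaylor t ht)).1, hle t ht]
  refine ⟨h3, fun t ht => ⟨sub_nonneg.2 (hle t ht), ?_⟩⟩
  have := htaylor t ht
  rw [h3] at this
  linarith [(abs_le.1 this).1]

/-- If `h` is `C⁴` on an open set containing `[-δ, T]`, with `h 0 = 0`, `h' 0 = 0`,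
`h'' 0 = 2`, `h t ≤ t²` on `[-δ, T]`, and `|h⁽⁴⁾| ≤ κ` on `[-δ, T]`, then `h''' 0 = 0`
and `0 ≤ t² - h t ≤ κ t⁴ / 24` on `[-δ, T]`. -/
theorem third_deriv_eq_zero_and_fourth_order_bound
    {δ T κ : ℝ} (hδ : 0 < δ) (hT : 0 < T) (hκ : 0 ≤ κ)
    (h : ℝ → ℝ) (U : Set ℝ) (hU : IsOpen U) (hIccU : Icc (-δ) T ⊆ U)
    (hC4 : ContDiffOn ℝ 4 h U)
    (h0 : h 0 = 0) (h1 : deriv h 0 = 0) (h2 : iteratedDeriv 2 h 0 = 2)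
    (hle : ∀ t ∈ Icc (-δ) T, h t ≤ t ^ 2)
    (hbound : ∀ t ∈ Icc (-δ) T, |iteratedDeriv 4 h t| ≤ κ) :
    iteratedDeriv 3 h 0 = 0 ∧
      ∀ t ∈ Icc (-δ) T, 0 ≤ t ^ 2 - h t ∧ t ^ 2 - h t ≤ κ * t ^ 4 / 24 :=
  third_deriv_eq_zero_and_fourth_order_bound_general hδ hT h U hU hIccU hC4 h0 h1 h2 hle hbound
end

section
/- Let (Ω, 𝓕, P) be a probability space, (M, d) a metric space equipped with its Borel σ-algebra, μ a Borel probability measure on M, and X₁, X₂, … : Ω → M independent random variables each with distribution μ. Let f : M → ℝ be bounded and measurable, fix x ∈ M, m ∈ ℕ with m ≥ 1, and α > 0, and set ε_n := 2·n^{−1/(m+2+α)}. Define S_n(ω) := Σ_{j=1}^n k_{ε_n}(x, X_j(ω))·(f(x) − f(X_j(ω))) and a_n := ∫_M k_{ε_n}(x, y)·(f(x) − f(y)) dμ(y), where k_ε(x, y) := exp(−d(x, y)²/(2ε)). Then, P-almost surely, (2/(ε_n·(2π·ε_n)^{m/2})) · | S_n(ω)/n − a_n | → 0 as n → ∞. 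-/
/-!
For fixed `n` the summands `k_{ε_n}(x, X_j) (f x - f X_j)` are independent, identically
distributed with mean `a_n`, and bounded by `2C`. Hoeffding's inequality bounds the probability
that their empirical mean deviates from `a_n` by at least `n^{-β}` by `2 exp(-c n^{1-2β})`, which
is summable as soon as `β < 1/2`; by Borel–Cantelli the deviation is then almost surely eventually
below `n^{-β}`. The scaling factor grows like `n^γ` with `γ = (m+2)/(2(m+2+α))`, and `γ < 1/2`
because `α > 0`, so any `β ∈ (γ, 1/2)` makes the product tend to `0`.
-/

open MeasureTheory Filter Topology Real

/-- The Gaussian kernel with bandwidth `ε` built from the metric of `M`. -/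
noncomputable def gaussKernel {M : Type*} [MetricSpace M] (ε : ℝ) (x y : M) : ℝ :=
  Real.exp (-(dist x y) ^ 2 / (2 * ε))

/-- The bandwidth sequence `ε_n = 2 n^{-1/(m+2+α)}`. -/
noncomputable def epsSeq (m : ℕ) (α : ℝ) (n : ℕ) : ℝ :=
  2 * (n : ℝ) ^ (-(1 : ℝ) / (m + 2 + α))

open ProbabilityTheory

lemma summable_exp_neg_mul_rpow {a s : ℝ} (ha : 0 < a) (hs : 0 < s) :
    Summable fun n : ℕ => exp (-a * (n : ℝ) ^ s) := by
  refine summable_of_isBigO_nat (Real.summable_nat_rpow.2 (by norm_num : (-2 : ℝ) < -1)) ?_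
  have h := ((isLittleO_exp_neg_mul_rpow_atTop ha (-2 / s)).comp_tendsto
    ((tendsto_rpow_atTop hs).comp tendsto_natCast_atTop_atTop)).isBigO
  refine h.congr_right fun n => ?_
  simp only [Function.comp_apply]
  rw [← Real.rpow_mul n.cast_nonneg, mul_div_cancel₀ _ hs.ne']

lemma ae_eventually_notMem_of_summable_measureReal {α : Type*} [MeasurableSpace α]
    {μ : Measure α} [IsFiniteMeasure μ] {s : ℕ → Set α} (hs : Summable fun n => μ.real (s n)) :
    ∀ᵐ x ∂μ, ∀ᶠ n in atTop, x ∉ s n := by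
  refine ae_eventually_notMem ?_
  simp_rw [← fun n => ofReal_measureReal (μ := μ) (s := s n)]
  rw [← ENNReal.ofReal_tsum_of_nonneg (fun _ => measureReal_nonneg) hs]
  exact ENNReal.ofReal_ne_top

section Concentration

variable {Ω : Type*} [MeasurableSpace Ω] {μ : Measure Ω}

lemma measureReal_abs_sum_range_ge_le_of_iIndepFun [IsFiniteMeasure μ] {Y : ℕ → Ω → ℝ}
    (h_indep : iIndepFun Y μ) {c : NNReal} {n : ℕ}
    (h_subG : ∀ i < n, HasSubgaussianMGF (Y i) c μ) {ε : ℝ} (hε : 0 ≤ ε) :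
    μ.real {ω | ε ≤ |∑ i ∈ Finset.range n, Y i ω|} ≤ 2 * exp (-ε ^ 2 / (2 * n * c)) := by
  have h_pos := HasSubgaussianMGF.measure_sum_range_ge_le_of_iIndepFun h_indep h_subG hε
  have h_neg := HasSubgaussianMGF.measure_sum_range_ge_le_of_iIndepFun
    (h_indep.comp (fun _ => Neg.neg) fun _ => measurable_neg) (fun i hi => (h_subG i hi).neg) hε
  calc μ.real {ω | ε ≤ |∑ i ∈ Finset.range n, Y i ω|}
      ≤ μ.real ({ω | ε ≤ ∑ i ∈ Finset.range n, Y i ω} ∪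
          {ω | ε ≤ ∑ i ∈ Finset.range n, (Neg.neg ∘ Y i) ω}) := by
        refine measureReal_mono fun ω hω => ?_
        simpa [Finset.sum_neg_distrib, le_abs] using hω
    _ ≤ 2 * exp (-ε ^ 2 / (2 * n * c)) := (measureReal_union_le _ _).trans (by linarith)

lemma ae_eventually_abs_sum_range_lt_rpow [IsFiniteMeasure μ] {Y : ℕ → ℕ → Ω → ℝ}
    (h_indep : ∀ n, iIndepFun (Y n) μ) {c : NNReal} (hc : 0 < c)
    (h_subG : ∀ n j, HasSubgaussianMGF (Y n j) c μ) {β : ℝ} (hβ : β < 1 / 2) :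
    ∀ᵐ ω ∂μ, ∀ᶠ n : ℕ in atTop, |∑ j ∈ Finset.range n, Y n j ω| < (n : ℝ) ^ (1 - β) := by
  have h_tail : ∀ n : ℕ, μ.real {ω | (n : ℝ) ^ (1 - β) ≤ |∑ j ∈ Finset.range n, Y n j ω|} ≤
      2 * exp (-(2 * (c : ℝ))⁻¹ * (n : ℝ) ^ (1 - 2 * β)) := fun n => by
    have h_exponent : -((n : ℝ) ^ (1 - β)) ^ 2 / (2 * n * c) =
        -(2 * (c : ℝ))⁻¹ * (n : ℝ) ^ (1 - 2 * β) := by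
      rcases n.eq_zero_or_pos with rfl | hn
      · simp [Real.zero_rpow (by linarith : 1 - 2 * β ≠ 0)]
      have hn : (0 : ℝ) < n := Nat.cast_pos.2 hn
      rw [← Real.rpow_natCast, ← Real.rpow_mul hn.le,
        show 1 - 2 * β = (1 - β) * (2 : ℕ) - 1 by push_cast; ring, Real.rpow_sub_one hn.ne']
      field_simp
    rw [← h_exponent]
    exact measureReal_abs_sum_range_ge_le_of_iIndepFun (h_indep n) (fun j _ => h_subG n j)
      (by positivity)
  have h_summable := ((summable_exp_neg_mul_rpow (by positivity) (by linarith)).mul_left 2)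
    |>.of_nonneg_of_le (fun _ => measureReal_nonneg) h_tail
  filter_upwards [ae_eventually_notMem_of_summable_measureReal h_summable] with ω hω
  exact hω.mono fun n hn => not_le.1 hn

lemma ae_eventually_abs_average_sub_integral_lt [IsProbabilityMeasure μ]
    {M : Type*} [MeasurableSpace M] {ν : Measure M} {X : ℕ → Ω → M} (hX : ∀ j, Measurable (X j))
    (h_indep : iIndepFun X μ) (h_law : ∀ j, μ.map (X j) = ν)
    {g : ℕ → M → ℝ} (hg : ∀ n, Measurable (g n)) {K : ℝ} (hK : 0 < K)
    (hgK : ∀ n y, |g n y| ≤ K) {β : ℝ} (hβ : β < 1 / 2) :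
    ∀ᵐ ω ∂μ, ∀ᶠ n : ℕ in atTop,
      |(∑ j ∈ Finset.range n, g n (X j ω)) / n - ∫ y, g n y ∂ν| < (n : ℝ) ^ (-β) := by
  have h_mean : ∀ n j, ∫ ω, g n (X j ω) ∂μ = ∫ y, g n y ∂ν := fun n j => by
    rw [← h_law j, integral_map (hX j).aemeasurable (hg n).aestronglyMeasurable]
  have h_subG : ∀ n j, HasSubgaussianMGF (fun ω => g n (X j ω) - ∫ y, g n y ∂ν)
      ((‖K - -K‖₊ / 2) ^ 2) μ := fun n j => by
    rw [← h_mean n j]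
    exact hasSubgaussianMGF_of_mem_Icc ((hg n).comp (hX j)).aemeasurable
      (ae_of_all _ fun ω => abs_le.1 (hgK n (X j ω)))
  have hc : 0 < (‖K - -K‖₊ / 2) ^ 2 :=
    pow_pos (div_pos (nnnorm_pos.2 (by linarith)) two_pos) 2
  filter_upwards [ae_eventually_abs_sum_range_lt_rpow
    (fun n => h_indep.comp (fun _ y => g n y - ∫ y, g n y ∂ν) fun _ => (hg n).sub_const _)
    hc h_subG hβ] with ω hω
  filter_upwards [hω, eventually_gt_atTop 0] with n hn hn_pos
  replace hn_pos : (0 : ℝ) < n := Nat.cast_pos.2 hn_pos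
  simp only [Function.comp_apply] at hn
  rw [Finset.sum_sub_distrib, Finset.sum_const, Finset.card_range, nsmul_eq_mul,
    show 1 - β = -β + 1 by ring, Real.rpow_add_one hn_pos.ne'] at hn
  rwa [← mul_div_cancel_left₀ (∫ y, g n y ∂ν) hn_pos.ne', ← sub_div, abs_div,
    abs_of_pos hn_pos, div_lt_iff₀ hn_pos]

end Concentration

section GaussKernel

variable {M : Type*} [MetricSpace M]

lemma gaussKernel_pos (ε : ℝ) (x y : M) : 0 < gaussKernel ε x y :=
  exp_pos _

lemma gaussKernel_le_one {ε : ℝ} (hε : 0 ≤ ε) (x y : M) : gaussKernel ε x y ≤ 1 :=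
  exp_le_one_iff.2 (div_nonpos_of_nonpos_of_nonneg (neg_nonpos.2 (sq_nonneg _)) (by positivity))

lemma continuous_gaussKernel (ε : ℝ) (x : M) : Continuous (gaussKernel ε x) := by
  unfold gaussKernel
  fun_prop

lemma abs_gaussKernel_mul_sub_le {ε : ℝ} (hε : 0 ≤ ε) {f : M → ℝ} {C : ℝ}
    (hf : ∀ y, |f y| ≤ C) (x y : M) : |gaussKernel ε x y * (f x - f y)| ≤ 2 * C := by
  rw [abs_mul, abs_of_pos (gaussKernel_pos ε x y)]
  exact (mul_le_of_le_one_left (abs_nonneg _) (gaussKernel_le_one hε x y)).trans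
    ((abs_sub _ _).trans (by linarith [hf x, hf y]))

end GaussKernel

lemma epsSeq_nonneg (m : ℕ) (α : ℝ) (n : ℕ) : 0 ≤ epsSeq m α n := by
  unfold epsSeq
  positivity

lemma two_div_epsSeq_mul_rpow_eq (m : ℕ) (α : ℝ) {n : ℕ} (hn : 0 < n) :
    2 / (epsSeq m α n * (2 * π * epsSeq m α n) ^ ((m : ℝ) / 2)) =
      (4 * π) ^ (-((m : ℝ) / 2)) * (n : ℝ) ^ ((m + 2) / (2 * (m + 2 + α))) := by
  have hn : (0 : ℝ) < n := Nat.cast_pos.2 hn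
  set u := (n : ℝ) ^ (-(1 : ℝ) / (m + 2 + α))
  have hu : 0 < u := rpow_pos_of_pos hn _
  have h_eps : epsSeq m α n = 2 * u := rfl
  have h_pow : (n : ℝ) ^ ((m + 2) / (2 * (m + 2 + α))) = (u ^ (1 + (m : ℝ) / 2))⁻¹ := by
    rw [← rpow_neg hu.le, ← rpow_mul hn.le, mul_comm 2, ← div_div]
    ring_nf
  rw [h_pow, h_eps, show 2 * π * (2 * u) = 4 * π * u by ring, mul_rpow (by positivity) hu.le,
    rpow_neg (by positivity), rpow_add hu, rpow_one]
  field_simp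

lemma tendsto_two_div_epsSeq_mul_rpow_neg {m : ℕ} {α β : ℝ}
    (hβ : (m + 2) / (2 * (m + 2 + α)) < β) :
    Tendsto (fun n : ℕ => 2 / (epsSeq m α n * (2 * π * epsSeq m α n) ^ ((m : ℝ) / 2)) *
      (n : ℝ) ^ (-β)) atTop (𝓝 0) := by
  have h := ((tendsto_rpow_neg_atTop (sub_pos.2 hβ)).comp tendsto_natCast_atTop_atTop).const_mul
    ((4 * π) ^ (-((m : ℝ) / 2)))
  rw [mul_zero] at h
  refine h.congr' ?_
  filter_upwards [eventually_gt_atTop 0] with n hn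
  rw [Function.comp_apply, two_div_epsSeq_mul_rpow_eq m α hn, mul_assoc,
    ← rpow_add (Nat.cast_pos.2 hn)]
  ring_nf

theorem graph_laplacian_concentration_general
    {Ω : Type*} [MeasurableSpace Ω] (P : Measure Ω) [IsProbabilityMeasure P]
    {M : Type*} [MetricSpace M] [MeasurableSpace M] [BorelSpace M]
    (μ : Measure M) [IsProbabilityMeasure μ]
    (X : ℕ → Ω → M) (hXmeas : ∀ j, Measurable (X j))
    (hXindep : ProbabilityTheory.iIndepFun X P)
    (hXlaw : ∀ j, Measure.map (X j) P = μ)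
    (f : M → ℝ) (hfmeas : Measurable f) (C : ℝ) (hfbdd : ∀ y, |f y| ≤ C)
    (x : M) (m : ℕ) (α : ℝ) (hα : 0 < α) :
    ∀ᵐ ω ∂P, Tendsto (fun n : ℕ =>
        (2 / (epsSeq m α n * (2 * π * epsSeq m α n) ^ ((m : ℝ) / 2))) *
          |(∑ j ∈ Finset.range n,
              gaussKernel (epsSeq m α n) x (X j ω) * (f x - f (X j ω))) / n -
            ∫ y, gaussKernel (epsSeq m α n) x y * (f x - f y) ∂μ|)
      atTop (𝓝 0) := by
  have hγ : ((m : ℝ) + 2) / (2 * (m + 2 + α)) < 1 / 2 := by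
    rw [div_lt_iff₀ (by positivity)]
    linarith
  obtain ⟨β, hγβ, hβ⟩ := exists_between hγ
  have hC : 0 ≤ C := (abs_nonneg _).trans (hfbdd x)
  have h_scale_nonneg : ∀ n : ℕ,
      0 ≤ 2 / (epsSeq m α n * (2 * π * epsSeq m α n) ^ ((m : ℝ) / 2)) := fun n => by
    have := epsSeq_nonneg m α n
    positivity
  filter_upwards [ae_eventually_abs_average_sub_integral_lt hXmeas hXindep hXlaw
    (g := fun n y => gaussKernel (epsSeq m α n) x y * (f x - f y))
    (fun n => (continuous_gaussKernel _ x).measurable.mul (measurable_const.sub hfmeas))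
    -- Hoeffding's bound degenerates for a zero range, and `2 * C` may vanish.
    (by linarith : 0 < 2 * C + 1)
    (fun n y => (abs_gaussKernel_mul_sub_le (epsSeq_nonneg m α n) hfbdd x y).trans (by linarith))
    hβ] with ω hω
  exact squeeze_zero' (Eventually.of_forall fun n => mul_nonneg (h_scale_nonneg n) (abs_nonneg _))
    (hω.mono fun n hn => mul_le_mul_of_nonneg_left hn.le (h_scale_nonneg n))
    (tendsto_two_div_epsSeq_mul_rpow_neg hγβ)

/-- Concentration half of the pointwise convergence of graph Laplacians: for i.i.d.
samples `X₁, X₂, …` with law `μ` on a metric space and a bounded measurable `f`, the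
scaled deviation of the empirical graph-Laplacian sum from its mean tends to `0`
almost surely. -/
theorem graph_laplacian_concentration
    {Ω : Type*} [MeasurableSpace Ω] (P : Measure Ω) [IsProbabilityMeasure P]
    {M : Type*} [MetricSpace M] [MeasurableSpace M] [BorelSpace M]
    (μ : Measure M) [IsProbabilityMeasure μ]
    (X : ℕ → Ω → M) (hXmeas : ∀ j, Measurable (X j))
    (hXindep : ProbabilityTheory.iIndepFun X P)
    (hXlaw : ∀ j, Measure.map (X j) P = μ)
    (f : M → ℝ) (hfmeas : Measurable f) (C : ℝ) (hfbdd : ∀ y, |f y| ≤ C)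
    (x : M) (m : ℕ) (hm : 1 ≤ m) (α : ℝ) (hα : 0 < α) :
    ∀ᵐ ω ∂P, Tendsto (fun n : ℕ =>
        (2 / (epsSeq m α n * (2 * π * epsSeq m α n) ^ ((m : ℝ) / 2))) *
          |(∑ j ∈ Finset.range n,
              gaussKernel (epsSeq m α n) x (X j ω) * (f x - f (X j ω))) / n -
            ∫ y, gaussKernel (epsSeq m α n) x y * (f x - f y) ∂μ|)
      atTop (𝓝 0) :=
  graph_laplacian_concentration_general P μ X hXmeas hXindep hXlaw f hfmeas C hfbdd x m α hα
end
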